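/- arXiv:1103.3718 — 3 statements merged into one kernel-verified Lean document; each statement's English description precedes it below -/
import Mathlib

section
/- Let φ ∈ C_c^∞(ℝⁿ) and ρ > 0. Then for every ξ ∈ ℝⁿ and every j, 2π|ξ_j| ∫₀^∞ |φ̂(tξ)| dt ≤ ρ⁻¹‖φ‖_{L¹(ℝⁿ)} + ρ‖∂²φ/∂x_j²‖_{L¹(ℝⁿ)}, where φ̂ denotes the Fourier transform φ̂(ξ) = ∫ e^{-2πi x·ξ} φ(x) dx. -/
open MeasureTheory Real FourierTransform

namespace BogovskiiAux

variable {n : ℕ}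

lemma fourier_fderiv_apply {f : EuclideanSpace ℝ (Fin n) → ℂ}
    (hf : ContDiff ℝ (⊤ : ℕ∞) f) (hsupp : HasCompactSupport f)
    (v w : EuclideanSpace ℝ (Fin n)) :
    𝓕 (fun x => fderiv ℝ f x v) w
      = (2 * π * Complex.I * ((inner ℝ w v : ℝ) : ℂ)) * 𝓕 f w := by
  have hint : Integrable (fderiv ℝ f) :=
    ((hf.fderiv_right (m := (⊤ : ℕ∞)) (by simp)).continuous).integrable_of_hasCompactSupport (hsupp.fderiv ℝ)
  rw [← Real.fourier_continuousLinearMap_apply hint,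
    Real.fourier_fderiv (hf.continuous.integrable_of_hasCompactSupport hsupp)
      (hf.differentiable (by simp)) hint]
  simp [VectorFourier.fourierSMulRight_apply, Complex.real_smul, smul_smul]
  rw [innerSL_apply_apply]; ring

lemma fderiv_apply_contDiff {f : EuclideanSpace ℝ (Fin n) → ℂ} (hf : ContDiff ℝ (⊤ : ℕ∞) f)
    (v : EuclideanSpace ℝ (Fin n)) : ContDiff ℝ (⊤ : ℕ∞) (fun x => fderiv ℝ f x v) :=
  (hf.fderiv_right (m := (⊤ : ℕ∞)) (by simp)).clm_apply contDiff_const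

lemma fderiv_apply_compactSupport {f : EuclideanSpace ℝ (Fin n) → ℂ}
    (hsupp : HasCompactSupport f) (v : EuclideanSpace ℝ (Fin n)) :
    HasCompactSupport (fun x => fderiv ℝ f x v) :=
  hsupp.fderiv_apply ℝ v

lemma norm_fourier_decay {f : EuclideanSpace ℝ (Fin n) → ℂ}
    (hf : ContDiff ℝ (⊤ : ℕ∞) f) (hsupp : HasCompactSupport f) (j : Fin n)
    (w : EuclideanSpace ℝ (Fin n)) :
    (2 * π * |w j|) ^ 2 * ‖𝓕 f w‖ ≤
      ∫ x, ‖fderiv ℝ (fun y => fderiv ℝ f y (EuclideanSpace.single j 1)) x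
          (EuclideanSpace.single j 1)‖ := by
  set e : EuclideanSpace ℝ (Fin n) := EuclideanSpace.single j (1 : ℝ) with he
  set g : EuclideanSpace ℝ (Fin n) → ℂ := fun x => fderiv ℝ f x e with hg
  have hgC : ContDiff ℝ (⊤ : ℕ∞) g := fderiv_apply_contDiff hf e
  have hgS : HasCompactSupport g := fderiv_apply_compactSupport hsupp e
  have hwe : (inner ℝ w e : ℝ) = w j := by
    simp [he, EuclideanSpace.inner_single_right]
  have h1 : 𝓕 g w = (2 * π * Complex.I * ((w j : ℝ) : ℂ)) * 𝓕 f w := by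
    rw [hg]; rw [fourier_fderiv_apply hf hsupp e w, hwe]
  have h2 : 𝓕 (fun x => fderiv ℝ g x e) w
      = (2 * π * Complex.I * ((w j : ℝ) : ℂ)) * 𝓕 g w := by
    rw [fourier_fderiv_apply hgC hgS e w, hwe]
  have hn : ‖(2 * (π:ℂ) * Complex.I * ((w j : ℝ) : ℂ))‖ = 2 * π * |w j| := by
    simp [norm_mul, Complex.norm_real, abs_of_nonneg Real.pi_pos.le]
  have h3 : ‖𝓕 (fun x => fderiv ℝ g x e) w‖ = (2 * π * |w j|) ^ 2 * ‖𝓕 f w‖ := by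
    rw [h2, h1, ← mul_assoc, ← sq, norm_mul, norm_pow, hn]
  rw [← h3]
  exact VectorFourier.norm_fourierIntegral_le_integral_norm _ _ _ _ _

end BogovskiiAux

/-- For `φ ∈ C_c^∞(ℝⁿ)` and `ρ > 0`, for every `ξ` and `j`,
`2π|ξ_j| ∫₀^∞ |φ̂(tξ)| dt ≤ ρ⁻¹‖φ‖_{L¹} + ρ‖∂²φ/∂x_j²‖_{L¹}`. -/
theorem bogovskii_fourier_kernel_bound (n : ℕ)
    (φ : EuclideanSpace ℝ (Fin n) → ℂ)
    (hφ : ContDiff ℝ (⊤ : ℕ∞) φ) (hφsupp : HasCompactSupport φ)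
    (ρ : ℝ) (hρ : 0 < ρ) (ξ : EuclideanSpace ℝ (Fin n)) (j : Fin n) :
    2 * π * |ξ j| * ∫ t in Set.Ioi (0 : ℝ), ‖FourierTransform.fourier φ (t • ξ)‖ ≤
      ρ⁻¹ * (∫ x, ‖φ x‖) +
        ρ * ∫ x, ‖fderiv ℝ (fun y => fderiv ℝ φ y (EuclideanSpace.single j 1)) x
            (EuclideanSpace.single j 1)‖ := by
  have hA : (0:ℝ) ≤ ∫ x, ‖φ x‖ := integral_nonneg fun x => norm_nonneg _
  set A : ℝ := ∫ x, ‖φ x‖ with hAdef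
  set B : ℝ := ∫ x, ‖fderiv ℝ (fun y => fderiv ℝ φ y (EuclideanSpace.single j 1)) x
      (EuclideanSpace.single j 1)‖ with hBdef
  have hB : (0:ℝ) ≤ B := integral_nonneg fun x => norm_nonneg _
  rcases eq_or_ne (ξ j) 0 with h0 | h0
  · rw [h0]
    simp only [abs_zero, mul_zero, zero_mul]
    positivity
  · have ha : 0 < |ξ j| := abs_pos.2 h0
    set a : ℝ := |ξ j| with hadef
    have hπ : (0:ℝ) < π := Real.pi_pos
    set T : ℝ := (2 * π * ρ * a)⁻¹ with hTdef
    have hT0 : 0 < T := by positivity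
    set C : ℝ := B / (2 * π * a) ^ 2 with hCdef
    have hC : 0 ≤ C := by positivity
    set F : ℝ → ℝ := fun t => ‖𝓕 φ (t • ξ)‖ with hFdef
    have hφint : Integrable φ := hφ.continuous.integrable_of_hasCompactSupport hφsupp
    have bound1 : ∀ t : ℝ, F t ≤ A :=
      fun t => VectorFourier.norm_fourierIntegral_le_integral_norm _ _ _ _ _
    have bound2 : ∀ t ∈ Set.Ioi (0:ℝ), F t ≤ C * t ^ (-2 : ℝ) := by
      intro t ht
      have ht0 : (0:ℝ) < t := ht
      have key := BogovskiiAux.norm_fourier_decay hφ hφsupp j (t • ξ)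
      have hcoord : |(t • ξ) j| = t * a := by
        have : (t • ξ) j = t * ξ j := rfl
        rw [this, abs_mul, abs_of_pos ht0, hadef]
      rw [hcoord] at key
      have hrw : t ^ (-2:ℝ) = (t ^ 2)⁻¹ := by
        rw [Real.rpow_neg ht0.le]
        norm_num [Real.rpow_two]
      have hCt : C * t ^ (-2 : ℝ) = B / (2 * π * (t * a)) ^ 2 := by
        rw [hrw, hCdef, ← div_eq_mul_inv, div_div]
        congr 1
        ring
      rw [hCt, le_div_iff₀ (by positivity)]
      calc F t * (2 * π * (t * a)) ^ 2 = (2 * π * (t * a)) ^ 2 * F t := by ring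
        _ ≤ B := key
    have hcont : Continuous F := by
      have h1 : Continuous (𝓕 φ) :=
        VectorFourier.fourierIntegral_continuous Real.continuous_fourierChar
          (by exact continuous_inner) hφint
      exact (h1.comp (continuous_id.smul continuous_const)).norm
    have hIntC : IntegrableOn (fun t : ℝ => t ^ (-2:ℝ)) (Set.Ioi T) :=
      integrableOn_Ioi_rpow_of_lt (by norm_num) hT0
    have hInt2 : IntegrableOn F (Set.Ioi T) := by
      refine Integrable.mono' (hIntC.const_mul C) hcont.aestronglyMeasurable.restrict ?_
      filter_upwards [ae_restrict_mem measurableSet_Ioi] with t ht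
      rw [Real.norm_eq_abs, abs_of_nonneg (norm_nonneg _)]
      exact bound2 t (lt_trans hT0 ht)
    have hInt1 : IntegrableOn F (Set.Ioc 0 T) := hcont.integrableOn_Ioc
    have hsplit : ∫ t in Set.Ioi (0:ℝ), F t
        = (∫ t in Set.Ioc 0 T, F t) + ∫ t in Set.Ioi T, F t := by
      rw [← setIntegral_union (Set.Ioc_disjoint_Ioi le_rfl) measurableSet_Ioi hInt1 hInt2,
        Set.Ioc_union_Ioi_eq_Ioi hT0.le]
    have hest1 : ∫ t in Set.Ioc 0 T, F t ≤ T * A := by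
      have := setIntegral_mono_on hInt1 (integrableOn_const measure_Ioc_lt_top.ne)
        measurableSet_Ioc (fun t _ => bound1 t)
      simpa [Real.volume_Ioc, ENNReal.toReal_ofReal hT0.le, max_eq_left hT0.le] using this
    have hest2 : ∫ t in Set.Ioi T, F t ≤ C * T⁻¹ := by
      have h1 : ∫ t in Set.Ioi T, F t ≤ ∫ t in Set.Ioi T, C * t ^ (-2:ℝ) :=
        setIntegral_mono_on hInt2 (hIntC.const_mul C) measurableSet_Ioi
          (fun t ht => bound2 t (lt_trans hT0 ht))
      have h2 : ∫ t in Set.Ioi T, C * t ^ (-2:ℝ) = C * T⁻¹ := by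
        rw [integral_const_mul, integral_Ioi_rpow_of_lt (by norm_num) hT0]
        norm_num [Real.rpow_neg_one]
      linarith
    have htotal : ∫ t in Set.Ioi (0:ℝ), F t ≤ T * A + C * T⁻¹ := by
      rw [hsplit]; exact add_le_add hest1 hest2
    have hfinal : 2 * π * a * (T * A + C * T⁻¹) = ρ⁻¹ * A + ρ * B := by
      rw [hTdef, hCdef]
      field_simp
    calc 2 * π * a * ∫ t in Set.Ioi (0:ℝ), F t
        ≤ 2 * π * a * (T * A + C * T⁻¹) :=
          mul_le_mul_of_nonneg_left htotal (by positivity)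
      _ = ρ⁻¹ * A + ρ * B := hfinal
end

section
/- Let φ ∈ C_c^∞(ℝⁿ) and let T₂ be defined by T₂f(x) = ∫_{1/2}^{1} ∫ (∂φ/∂x_j)(y + (x−y)/t) f(y) dy dt/t^{n+1}. Then for every p with 1 ≤ p < n/(n−1) and every f ∈ L^p(ℝⁿ), ‖T₂f‖_{L^p(ℝⁿ)} ≤ (2^{n/p'} / (1 − n/p')) ‖∂φ/∂x_j‖_{L¹(ℝⁿ)} ‖f‖_{L^p(ℝⁿ)}, where p' is the conjugate exponent of p. -/
open MeasureTheory Real Set Function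
open scoped ENNReal NNReal


lemma my_iSup_min_nat (a : ℝ≥0∞) : (⨆ m : ℕ, min a m) = a := by
  apply le_antisymm (iSup_le fun m => min_le_left _ _)
  rcases eq_or_ne a ⊤ with h | h
  · have : ∀ m : ℕ, (m : ℝ≥0∞) ≤ ⨆ m : ℕ, min a m := fun m => by
      refine le_trans (le_of_eq ?_) (le_iSup (fun m : ℕ => min a m) m)
      rw [min_eq_right (h ▸ le_top)]
    calc a = ⊤ := h
      _ = ⨆ m : ℕ, (m : ℝ≥0∞) := ENNReal.iSup_natCast.symm
      _ ≤ _ := iSup_le this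
  · obtain ⟨m, hm⟩ := ENNReal.exists_nat_gt h.lt_top.ne
    calc a = min a m := (min_eq_left hm.le).symm
      _ ≤ _ := le_iSup (fun m : ℕ => min a m) m

/-- Minkowski's integral inequality for `ℝ≥0∞`-valued functions. -/
lemma my_minkowski {α β : Type*} [MeasurableSpace α] [MeasurableSpace β]
    (μ : Measure α) (ν : Measure β) [SigmaFinite μ] [SigmaFinite ν]
    {p : ℝ} (hp : 1 ≤ p) (F : α → β → ℝ≥0∞)
    (hF : Measurable (Function.uncurry F)) :
    (∫⁻ x, (∫⁻ y, F x y ∂ν) ^ p ∂μ) ^ (1 / p) ≤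
      ∫⁻ y, (∫⁻ x, F x y ^ p ∂μ) ^ (1 / p) ∂ν := by
  have hFx : ∀ y, Measurable fun x => F x y := fun y =>
    hF.comp (measurable_id.prodMk measurable_const)
  have hFy : ∀ x, Measurable (F x) := fun x =>
    hF.comp (measurable_const.prodMk measurable_id)
  rcases eq_or_lt_of_le hp with hp1 | hp1
  · simp only [← hp1, ENNReal.rpow_one, one_div, inv_one]
    exact le_of_eq (lintegral_lintegral_swap hF.aemeasurable)
  -- p > 1
  set q := Real.conjExponent p with hq
  have hpq : p.HolderConjugate q := Real.HolderConjugate.conjExponent hp1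
  have hp0 : (0:ℝ) < p := hpq.pos
  have hq0 : (0:ℝ) < 1/q := one_div_pos.2 hpq.symm.pos
  set G : α → ℝ≥0∞ := fun x => ∫⁻ y, F x y ∂ν with hG
  have hGm : Measurable G := hF.lintegral_prod_right'
  set Gm : ℕ → α → ℝ≥0∞ := fun m x => (spanningSets μ m).indicator (fun x => min (G x) m) x
    with hGmdef
  have hGmmeas : ∀ m, Measurable (Gm m) :=
    fun m => (hGm.min measurable_const).indicator (measurableSet_spanningSets μ m)
  have hGmle : ∀ m x, Gm m x ≤ G x := by
    intro m x
    by_cases h : x ∈ spanningSets μ m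
    · rw [hGmdef]; simp only [Set.indicator_of_mem h]; exact min_le_left _ _
    · rw [hGmdef]; simp only [Set.indicator_of_notMem h]; exact zero_le
  have hGmmono : Monotone Gm := by
    intro m m' hmm' x
    by_cases h : x ∈ spanningSets μ m
    · have h' : x ∈ spanningSets μ m' := monotone_spanningSets μ hmm' h
      rw [hGmdef]; simp only [Set.indicator_of_mem h, Set.indicator_of_mem h']
      exact min_le_min le_rfl (by exact_mod_cast Nat.cast_le.2 hmm')
    · rw [hGmdef]; simp only [Set.indicator_of_notMem h]; exact zero_le
  have hGmsup : ∀ x, (⨆ m, Gm m x) = G x := by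
    intro x
    obtain ⟨m0, hm0⟩ : ∃ m0, x ∈ spanningSets μ m0 := by
      have hx : x ∈ ⋃ m, spanningSets μ m := (iUnion_spanningSets μ) ▸ Set.mem_univ x
      exact Set.mem_iUnion.1 hx
    apply le_antisymm (iSup_le fun m => hGmle m x)
    calc G x = ⨆ m : ℕ, min (G x) m := (my_iSup_min_nat (G x)).symm
    _ ≤ ⨆ m, Gm m x := by
        apply iSup_le fun m => ?_
        refine le_trans ?_ (le_iSup _ (max m m0))
        have hxmem : x ∈ spanningSets μ (max m m0) :=
          monotone_spanningSets μ (le_max_right _ _) hm0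
        rw [hGmdef]; simp only [Set.indicator_of_mem hxmem]
        exact min_le_min le_rfl (by exact_mod_cast Nat.cast_le.2 (le_max_left m m0))
  -- it suffices to bound each truncation
  set R := ∫⁻ y, (∫⁻ x, F x y ^ p ∂μ) ^ (1 / p) ∂ν with hR
  have key : ∀ m, (∫⁻ x, Gm m x ^ p ∂μ) ^ (1/p) ≤ R := by
    intro m
    set A := ∫⁻ x, Gm m x ^ p ∂μ with hA
    have hAtop : A < ⊤ := by
      have hb : ∀ x, Gm m x ^ p ≤ (spanningSets μ m).indicator (fun _ => (m:ℝ≥0∞)^p) x := by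
        intro x
        by_cases h : x ∈ spanningSets μ m
        · simp only [hGmdef, Set.indicator_of_mem h]
          exact ENNReal.rpow_le_rpow (min_le_right _ _) hp0.le
        · simp [hGmdef, Set.indicator_of_notMem h, ENNReal.zero_rpow_of_pos hp0]
      calc A ≤ ∫⁻ x, (spanningSets μ m).indicator (fun _ => (m:ℝ≥0∞)^p) x ∂μ :=
            lintegral_mono hb
        _ = (m:ℝ≥0∞)^p * μ (spanningSets μ m) := by
            rw [lintegral_indicator (measurableSet_spanningSets μ m)]; simp [mul_comm]
        _ < ⊤ := ENNReal.mul_lt_top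
              (ENNReal.rpow_lt_top_of_nonneg hp0.le (ENNReal.natCast_ne_top m))
              (measure_spanningSets_lt_top μ m)
    rcases eq_or_ne A 0 with hA0 | hA0
    · rw [hA0, ENNReal.zero_rpow_of_pos (by positivity)]; exact zero_le
    -- main estimate
    have main : A ≤ R * A ^ (1/q) := by
      have step1 : A ≤ ∫⁻ x, Gm m x ^ (p - 1) * G x ∂μ := by
        apply lintegral_mono fun x => ?_
        have hxe : Gm m x ^ p = Gm m x ^ (p-1) * Gm m x := by
          nth_rewrite 1 [show p = p - 1 + 1 by ring]
          rw [ENNReal.rpow_add_of_nonneg _ _ (by linarith) zero_le_one, ENNReal.rpow_one]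
        rw [hxe]
        exact mul_le_mul_right (hGmle m x) _
      have step2 : ∫⁻ x, Gm m x ^ (p - 1) * G x ∂μ
          = ∫⁻ y, ∫⁻ x, Gm m x ^ (p-1) * F x y ∂μ ∂ν := by
        rw [← lintegral_lintegral_swap]
        · apply lintegral_congr fun x => ?_
          rw [← lintegral_const_mul _ (hFy x)]
        · apply AEMeasurable.mul ?_ hF.aemeasurable
          exact (((hGmmeas m).pow_const _).comp measurable_fst).aemeasurable
      have step3 : ∀ y : β, ∫⁻ x, Gm m x ^ (p-1) * F x y ∂μ ≤
          (∫⁻ x, F x y ^ p ∂μ) ^ (1/p) * A ^ (1/q) := by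
        intro y
        calc ∫⁻ x, Gm m x ^ (p-1) * F x y ∂μ = ∫⁻ x, F x y * Gm m x ^ (p-1) ∂μ := by
              simp only [mul_comm]
          _ ≤ (∫⁻ x, F x y ^ p ∂μ) ^ (1/p) * (∫⁻ x, (Gm m x ^ (p-1)) ^ q ∂μ) ^ (1/q) :=
              ENNReal.lintegral_mul_le_Lp_mul_Lq μ hpq (hFx y).aemeasurable
                ((hGmmeas m).pow_const _).aemeasurable
          _ = (∫⁻ x, F x y ^ p ∂μ) ^ (1/p) * A ^ (1/q) := by
              congr 2
              apply lintegral_congr fun x => ?_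
              rw [← ENNReal.rpow_mul, hpq.sub_one_mul_conj]
      calc A ≤ ∫⁻ y, ∫⁻ x, Gm m x ^ (p-1) * F x y ∂μ ∂ν := step2 ▸ step1
        _ ≤ ∫⁻ y, (∫⁻ x, F x y ^ p ∂μ) ^ (1/p) * A ^ (1/q) ∂ν := lintegral_mono step3
        _ = R * A ^ (1/q) := lintegral_mul_const' _ _
            (ENNReal.rpow_ne_top_of_nonneg hq0.le hAtop.ne)
    -- divide
    have hAq : A ^ (1/q) ≠ 0 := by
      simp only [ne_eq, ENNReal.rpow_eq_zero_iff, not_or]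
      exact ⟨fun ⟨h0, _⟩ => hA0 h0, fun ⟨htop, _⟩ => hAtop.ne htop⟩
    have hAqtop : A ^ (1/q) ≠ ⊤ := ENNReal.rpow_ne_top_of_nonneg hq0.le hAtop.ne
    have hdiv := ENNReal.div_le_div_right main (A ^ (1/q))
    rw [mul_div_assoc, ENNReal.div_self hAq hAqtop, mul_one] at hdiv
    calc A ^ (1/p) = A ^ ((1:ℝ) - 1/q) := by
          congr 1
          have := hpq.inv_add_inv_eq_one
          rw [one_div, one_div]; linarith
      _ = A ^ (1:ℝ) / A ^ (1/q) := ENNReal.rpow_sub _ _ hA0 hAtop.ne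
      _ = A / A ^ (1/q) := by rw [ENNReal.rpow_one]
      _ ≤ R := hdiv
  -- monotone convergence
  have hsup : (∫⁻ x, G x ^ p ∂μ) = ⨆ m, ∫⁻ x, Gm m x ^ p ∂μ := by
    rw [← lintegral_iSup (fun m => (hGmmeas m).pow_const _)
      (fun i j hij x => ENNReal.rpow_le_rpow (hGmmono hij x) hp0.le)]
    apply lintegral_congr fun x => ?_
    rw [← hGmsup x]
    exact (ENNReal.monotone_rpow_of_nonneg hp0.le).map_iSup_of_continuousAt
      (ENNReal.continuous_rpow_const.continuousAt) (by rw [bot_eq_zero, ENNReal.zero_rpow_of_pos hp0])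
  rw [hsup, (ENNReal.monotone_rpow_of_nonneg (one_div_pos.2 hp0).le).map_iSup_of_continuousAt
      (ENNReal.continuous_rpow_const.continuousAt)
      (by rw [bot_eq_zero, ENNReal.zero_rpow_of_pos (one_div_pos.2 hp0)])]
  exact iSup_le key


lemma my_lintegral_affine {n : ℕ} (g : EuclideanSpace ℝ (Fin n) → ℝ≥0∞) {c : ℝ} (hc : c ≠ 0)
    (b : EuclideanSpace ℝ (Fin n)) :
    ∫⁻ x, g (c • x + b) = ENNReal.ofReal |(c ^ n)|⁻¹ * ∫⁻ x, g x := by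
  set e := (Homeomorph.smul (isUnit_iff_ne_zero.2 hc).unit
      (α := EuclideanSpace ℝ (Fin n))).toMeasurableEquiv with he
  have hef : ∀ x, e x = c • x := fun x => rfl
  have h1 : ∫⁻ x, g (c • x + b) = ∫⁻ z, g (z + b) ∂(volume.map e) := by
    rw [lintegral_map_equiv (fun z => g (z + b)) e]
    exact lintegral_congr fun x => by rw [hef]
  have h2 : volume.map e = volume.map (fun x : EuclideanSpace ℝ (Fin n) => c • x) := by
    congr 1
  rw [h1, h2, Measure.map_addHaar_smul volume hc, lintegral_smul_measure,
    lintegral_add_right_eq_self (fun z => g z) b, finrank_euclideanSpace_fin, abs_inv, smul_eq_mul]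

/-- For `1 ≤ p < n/(n−1)` (equivalently `n/p' = n(1 − 1/p) < 1`, where `p'`
is the conjugate exponent of `p`), the operator
`T₂f(x) = ∫_{1/2}^1 ∫ (∂φ/∂x_j)(y + (x−y)/t) f(y) dy dt/t^{n+1}` satisfies
`‖T₂f‖_{L^p} ≤ (2^{n/p'} / (1 − n/p')) ‖∂φ/∂x_j‖_{L¹} ‖f‖_{L^p}`.
Here `n/p'` is written as `n * (1 - 1/p)`. -/
theorem bogovskii_T2_Lp_bound (n : ℕ)
    (φ : EuclideanSpace ℝ (Fin n) → ℝ)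
    (hφ : ContDiff ℝ (⊤ : ℕ∞) φ) (hφsupp : HasCompactSupport φ) (j : Fin n)
    (p : ℝ) (hp1 : 1 ≤ p) (hp2 : (n : ℝ) * (1 - 1 / p) < 1)
    (f : EuclideanSpace ℝ (Fin n) → ℝ)
    (hf : MemLp f (ENNReal.ofReal p) volume) :
    eLpNorm (fun x => ∫ t in Set.Ioc (1/2 : ℝ) 1,
        (∫ y, fderiv ℝ φ (y + t⁻¹ • (x - y)) (EuclideanSpace.single j 1) * f y) / t ^ (n + 1))
      (ENNReal.ofReal p) volume ≤
    ENNReal.ofReal ((2 : ℝ) ^ ((n : ℝ) * (1 - 1 / p)) / (1 - (n : ℝ) * (1 - 1 / p)) *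
        ∫ x, |fderiv ℝ φ x (EuclideanSpace.single j 1)|) *
      eLpNorm f (ENNReal.ofReal p) volume := by
  have E := 0
  clear E
  have hp0 : (0:ℝ) < p := lt_of_lt_of_le zero_lt_one hp1
  set a : ℝ := (n : ℝ) * (1 - 1/p) with ha
  have ha0 : 0 ≤ a := by
    apply mul_nonneg (Nat.cast_nonneg n)
    have : 1/p ≤ 1 := by rw [div_le_one hp0]; exact hp1
    linarith
  have ha1 : a < 1 := hp2
  set ψ : EuclideanSpace ℝ (Fin n) → ℝ := fun x => fderiv ℝ φ x (EuclideanSpace.single j 1) with hψ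
  have hψc : Continuous ψ := by
    have h1 : Continuous (fderiv ℝ φ) := (hφ.continuous_fderiv (by simp))
    exact h1.clm_apply continuous_const
  have hψsupp : HasCompactSupport ψ := by
    apply HasCompactSupport.comp_left (g := fun L : EuclideanSpace ℝ (Fin n) →L[ℝ] ℝ => L (EuclideanSpace.single j 1))
      (hφsupp.fderiv ℝ) rfl
  have hψint : Integrable ψ volume := hψc.integrable_of_hasCompactSupport hψsupp
  set f' : EuclideanSpace ℝ (Fin n) → ℝ := hf.1.mk f with hf'def
  have hf'm : StronglyMeasurable f' := hf.1.stronglyMeasurable_mk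
  have hff' : f =ᵐ[volume] f' := hf.1.ae_eq_mk
  set q : ℝ≥0∞ := ENNReal.ofReal p with hqdef
  have hq0 : q ≠ 0 := by simp [hqdef, ENNReal.ofReal_eq_zero, not_le, hp0]
  have hqt : q ≠ ⊤ := ENNReal.ofReal_ne_top
  have hqr : q.toReal = p := ENNReal.toReal_ofReal hp0.le
  set Iψ : ℝ≥0∞ := ∫⁻ z, ‖ψ z‖₊ with hIψdef
  have hIψ : Iψ = ENNReal.ofReal (∫ x, |ψ x|) := by
    rw [hIψdef]; simp only [← enorm_eq_nnnorm]; rw [← ofReal_integral_norm_eq_lintegral_enorm hψint]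
    simp only [Real.norm_eq_abs]
  set Np : ℝ≥0∞ := ∫⁻ x, (‖f' x‖₊ : ℝ≥0∞) ^ p with hNpdef
  set N : ℝ≥0∞ := eLpNorm f q volume with hNdef
  have hN : N = Np ^ (1/p) := by
    rw [hNdef, eLpNorm_congr_ae hff', eLpNorm_eq_lintegral_rpow_enorm_toReal hq0 hqt, hqr]; rfl
  set H : EuclideanSpace ℝ (Fin n) → ℝ → ℝ≥0∞ := fun x t =>
    (∫⁻ y, (‖ψ (y + t⁻¹ • (x - y))‖₊ : ℝ≥0∞) * ‖f' y‖₊) * ENNReal.ofReal ((t^(n+1))⁻¹)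
    with hHdef
  have hHmeas : Measurable (Function.uncurry H) := by
    apply Measurable.mul
    · apply Measurable.lintegral_prod_right'
        (f := fun (q : (EuclideanSpace ℝ (Fin n) × ℝ) × EuclideanSpace ℝ (Fin n)) =>
          (‖ψ (q.2 + q.1.2⁻¹ • (q.1.1 - q.2))‖₊ : ℝ≥0∞) * ‖f' q.2‖₊)
      apply Measurable.fun_mul
      · have hm : Measurable fun q : (EuclideanSpace ℝ (Fin n) × ℝ) × EuclideanSpace ℝ (Fin n) =>
            q.2 + q.1.2⁻¹ • (q.1.1 - q.2) :=
          measurable_snd.add ((measurable_fst.snd.inv).smul (measurable_fst.fst.sub measurable_snd))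
        exact (hψc.measurable.comp hm).nnnorm.coe_nnreal_ennreal
      · exact (hf'm.measurable.comp measurable_snd).nnnorm.coe_nnreal_ennreal
    · exact ENNReal.measurable_ofReal.comp ((measurable_snd.pow_const (n+1)).inv)
  -- pointwise bound
  have hpt : ∀ x : EuclideanSpace ℝ (Fin n), (‖∫ t in Set.Ioc (1/2 : ℝ) 1,
        (∫ y, ψ (y + t⁻¹ • (x - y)) * f y) / t ^ (n + 1)‖₊ : ℝ≥0∞) ≤
      ∫⁻ t in Set.Ioo (1/2 : ℝ) 1, H x t := by
    intro x
    have hinner : ∀ t : ℝ, (∫ y, ψ (y + t⁻¹ • (x - y)) * f y) =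
        ∫ y, ψ (y + t⁻¹ • (x - y)) * f' y := fun t =>
      integral_congr_ae (hff'.mono fun y hy => by dsimp only; rw [hy])
    have hAB : (∫ t in Set.Ioc (1/2:ℝ) 1, (∫ y, ψ (y + t⁻¹ • (x - y)) * f y) / t^(n+1)) =
        ∫ t in Set.Ioc (1/2:ℝ) 1, (∫ y, ψ (y + t⁻¹ • (x - y)) * f' y) / t^(n+1) :=
      integral_congr_ae (Filter.Eventually.of_forall fun t => by dsimp only; rw [hinner t])
    rw [hAB]
    calc (‖∫ t in Set.Ioc (1/2:ℝ) 1,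
          (∫ y, ψ (y + t⁻¹ • (x - y)) * f' y) / t^(n+1)‖₊ : ℝ≥0∞)
        ≤ ∫⁻ t in Set.Ioc (1/2:ℝ) 1,
            ‖(∫ y, ψ (y + t⁻¹ • (x - y)) * f' y) / t^(n+1)‖₊ :=
          enorm_integral_le_lintegral_enorm _
      _ = ∫⁻ t in Set.Ioo (1/2:ℝ) 1,
            ‖(∫ y, ψ (y + t⁻¹ • (x - y)) * f' y) / t^(n+1)‖₊ :=
          (setLIntegral_congr (Ioo_ae_eq_Ioc)).symm
      _ ≤ ∫⁻ t in Set.Ioo (1/2:ℝ) 1, H x t := by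
          apply setLIntegral_mono' measurableSet_Ioo
          intro t ht
          have ht0 : (0:ℝ) < t := by linarith [ht.1]
          have htpow : (0:ℝ) < t^(n+1) := pow_pos ht0 _
          calc (‖(∫ y, ψ (y + t⁻¹ • (x - y)) * f' y) / t^(n+1)‖₊ : ℝ≥0∞)
              = (‖∫ y, ψ (y + t⁻¹ • (x - y)) * f' y‖₊ : ℝ≥0∞)
                  * ENNReal.ofReal ((t^(n+1))⁻¹) := by
                rw [← enorm_eq_nnnorm, ← enorm_eq_nnnorm, ← ofReal_norm, ← ofReal_norm, norm_div,
                  Real.norm_eq_abs (t^(n+1)), abs_of_pos htpow, div_eq_mul_inv,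
                  ENNReal.ofReal_mul (norm_nonneg _)]
            _ ≤ (∫⁻ y, (‖ψ (y + t⁻¹ • (x - y)) * f' y‖₊ : ℝ≥0∞))
                  * ENNReal.ofReal ((t^(n+1))⁻¹) :=
                mul_le_mul_left (enorm_integral_le_lintegral_enorm _) _
            _ = H x t := by
                rw [hHdef]
                congr 1
                apply lintegral_congr fun y => ?_
                rw [nnnorm_mul, ENNReal.coe_mul]
  -- per-t bound
  have hstep : ∀ t ∈ Set.Ioo (1/2 : ℝ) 1,
      (∫⁻ x, H x t ^ p) ^ (1/p) ≤ ENNReal.ofReal (2 * (1-t) ^ (-a)) * (Iψ * Np ^ (1/p)) := by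
    rintro t ⟨ht2, ht1⟩
    have ht0 : (0:ℝ) < t := by linarith
    have hu0 : (0:ℝ) < 1 - t := by linarith
    have hs1 : 1 < t⁻¹ := by
      rw [← one_div, lt_div_iff₀ ht0]
      linarith
    set c : ℝ := 1 - t⁻¹ with hcdef
    have hcneg : c < 0 := by rw [hcdef]; linarith
    have hc : c ≠ 0 := ne_of_lt hcneg
    have habsc : |c| = (1 - t) / t := by
      rw [abs_of_neg hcneg, hcdef]
      field_simp
      ring
    set d : ℝ := -(c⁻¹ * t⁻¹) with hddef
    have hd : d ≠ 0 := by
      rw [hddef, neg_ne_zero]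
      exact mul_ne_zero (inv_ne_zero hc) (inv_ne_zero ht0.ne')
    have habsd : |d| = (1 - t)⁻¹ := by
      rw [hddef, abs_neg, abs_mul, abs_inv, abs_inv, habsc, abs_of_pos ht0, inv_div]
      field_simp
    set F : EuclideanSpace ℝ (Fin n) → EuclideanSpace ℝ (Fin n) → ℝ≥0∞ :=
      fun x z => (‖ψ z‖₊ : ℝ≥0∞) * ‖f' (c⁻¹ • z + d • x)‖₊ with hFdef
    have hFmeas : Measurable (Function.uncurry F) := by
      apply Measurable.fun_mul
      · exact (hψc.measurable.comp measurable_snd).nnnorm.coe_nnreal_ennreal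
      · have hm : Measurable fun w : EuclideanSpace ℝ (Fin n) × EuclideanSpace ℝ (Fin n) =>
            c⁻¹ • w.2 + d • w.1 := (measurable_snd.const_smul c⁻¹).add (measurable_fst.const_smul d)
        exact (hf'm.measurable.comp hm).nnnorm.coe_nnreal_ennreal
    set Ct : ℝ≥0∞ := ENNReal.ofReal ((t^(n+1))⁻¹) * ENNReal.ofReal |(c^n)|⁻¹ with hCtdef
    have hCtt : Ct ≠ ⊤ := ENNReal.mul_ne_top ENNReal.ofReal_ne_top ENNReal.ofReal_ne_top
    have hHt : ∀ x, H x t = Ct * ∫⁻ z, F x z := by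
      intro x
      have harg : ∀ y : EuclideanSpace ℝ (Fin n),
          y + t⁻¹ • (x - y) = c • y + t⁻¹ • x := by
        intro y
        rw [smul_sub, hcdef, sub_smul, one_smul]
        abel
      have hgy : ∀ y : EuclideanSpace ℝ (Fin n),
          (‖ψ (y + t⁻¹ • (x - y))‖₊ : ℝ≥0∞) * ‖f' y‖₊ = F x (c • y + t⁻¹ • x) := by
        intro y
        rw [hFdef]
        dsimp only
        rw [harg y]
        congr 2
        rw [smul_add, smul_smul, inv_mul_cancel₀ hc, one_smul, smul_smul, add_assoc,
          ← add_smul, show c⁻¹ * t⁻¹ + d = 0 by rw [hddef]; ring, zero_smul, add_zero]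
      have haff := my_lintegral_affine (F x) hc (t⁻¹ • x)
      rw [hHdef]
      dsimp only
      rw [lintegral_congr hgy, haff, hCtdef]
      ring
    have hNpt : Np ^ (1/p) ≠ ⊤ := by rw [← hN]; exact hf.2.ne
    have hinner : ∀ z, (∫⁻ x, F x z ^ p) ^ (1/p) =
        (‖ψ z‖₊ : ℝ≥0∞) * (ENNReal.ofReal |(d^n)|⁻¹ * Np) ^ (1/p) := by
      intro z
      have h1 : ∀ x : EuclideanSpace ℝ (Fin n),
          F x z ^ p = (‖ψ z‖₊ : ℝ≥0∞) ^ p * (fun w => (‖f' w‖₊ : ℝ≥0∞) ^ p) (d • x + c⁻¹ • z) := by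
        intro x
        rw [hFdef]
        dsimp only
        rw [add_comm (c⁻¹ • z), ENNReal.mul_rpow_of_nonneg _ _ hp0.le]
      rw [lintegral_congr h1,
        lintegral_const_mul' _ _ (ENNReal.rpow_ne_top_of_nonneg hp0.le ENNReal.coe_ne_top),
        my_lintegral_affine (fun w => (‖f' w‖₊ : ℝ≥0∞) ^ p) hd (c⁻¹ • z),
        ENNReal.mul_rpow_of_nonneg _ _ (by positivity : (0:ℝ) ≤ 1/p),
        ← ENNReal.rpow_mul, mul_one_div, div_self hp0.ne', ENNReal.rpow_one, ← hNpdef]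
    have hmink := my_minkowski volume volume hp1 F hFmeas
    have hchain : (∫⁻ x, H x t ^ p) ^ (1/p) ≤
        (Ct * (ENNReal.ofReal |(d^n)|⁻¹) ^ (1/p)) * (Iψ * Np ^ (1/p)) := by
      calc (∫⁻ x, H x t ^ p) ^ (1/p)
          = (Ct ^ p * ∫⁻ x, (∫⁻ z, F x z) ^ p) ^ (1/p) := by
            rw [lintegral_congr fun x => by
                rw [hHt x, ENNReal.mul_rpow_of_nonneg _ _ hp0.le],
              lintegral_const_mul' _ _ (ENNReal.rpow_ne_top_of_nonneg hp0.le hCtt)]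
        _ = Ct * (∫⁻ x, (∫⁻ z, F x z) ^ p) ^ (1/p) := by
            rw [ENNReal.mul_rpow_of_nonneg _ _ (by positivity : (0:ℝ) ≤ 1/p),
              ← ENNReal.rpow_mul, mul_one_div, div_self hp0.ne', ENNReal.rpow_one]
        _ ≤ Ct * ∫⁻ z, (∫⁻ x, F x z ^ p) ^ (1/p) := mul_le_mul_right hmink _
        _ = Ct * (Iψ * (ENNReal.ofReal |(d^n)|⁻¹ * Np) ^ (1/p)) := by
            rw [lintegral_congr hinner, lintegral_mul_const' _ _
              (ENNReal.rpow_ne_top_of_nonneg (by positivity)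
                (ENNReal.mul_ne_top ENNReal.ofReal_ne_top
                  (fun hNp => hNpt (by rw [hNp, ENNReal.top_rpow_of_pos (one_div_pos.2 hp0)]))))]
        _ = (Ct * (ENNReal.ofReal |(d^n)|⁻¹) ^ (1/p)) * (Iψ * Np ^ (1/p)) := by
            rw [ENNReal.mul_rpow_of_nonneg _ _ (by positivity : (0:ℝ) ≤ 1/p)]
            ring
    refine le_trans hchain (mul_le_mul_left ?_ _)
    -- constant computation
    have hKreal : (t^(n+1))⁻¹ * |(c^n)|⁻¹ * (|(d^n)|⁻¹) ^ (1/p) ≤ 2 * (1-t) ^ (-a) := by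
      rw [abs_pow, abs_pow, habsc, habsd, inv_pow, inv_inv]
      have e1 : (((1-t) / t) ^ n : ℝ)⁻¹ = t^n * ((1-t)^n)⁻¹ := by
        rw [div_pow, inv_div, div_eq_mul_inv]
      have e2 : ((t^(n+1) : ℝ))⁻¹ * (t^n * ((1-t)^n)⁻¹) = t⁻¹ * ((1-t)^n)⁻¹ := by
        rw [pow_succ]
        field_simp
      have e3 : (((1-t)^n : ℝ)) ^ (1/p) = (1-t) ^ ((n:ℝ) * (1/p)) := by
        rw [← Real.rpow_natCast (1-t) n, ← Real.rpow_mul hu0.le]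
      have e4 : (((1-t)^n : ℝ))⁻¹ = (1-t) ^ (-(n:ℝ)) := by
        rw [← Real.rpow_natCast (1-t) n, ← Real.rpow_neg hu0.le]
      calc (t^(n+1) : ℝ)⁻¹ * (((1-t) / t) ^ n)⁻¹ * ((1-t)^n) ^ (1/p)
          = t⁻¹ * (((1-t)^n)⁻¹ * ((1-t)^n) ^ (1/p)) := by
            rw [e1, e2]; ring
        _ = t⁻¹ * (1-t) ^ (-a) := by
            rw [e3, e4, ← Real.rpow_add hu0]
            congr 1
            rw [ha]; ring
        _ ≤ 2 * (1-t) ^ (-a) := by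
            apply mul_le_mul_of_nonneg_right _ (Real.rpow_nonneg hu0.le _)
            calc t⁻¹ ≤ (1/2 : ℝ)⁻¹ := by
                  apply inv_anti₀ (by norm_num) ht2.le
              _ = 2 := by norm_num
    calc Ct * (ENNReal.ofReal |(d^n)|⁻¹) ^ (1/p)
        = ENNReal.ofReal ((t^(n+1))⁻¹ * |(c^n)|⁻¹ * (|(d^n)|⁻¹) ^ (1/p)) := by
          rw [hCtdef, ENNReal.ofReal_rpow_of_nonneg (by positivity) (by positivity),
            ← ENNReal.ofReal_mul (by positivity), ← ENNReal.ofReal_mul (by positivity)]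
      _ ≤ ENNReal.ofReal (2 * (1-t) ^ (-a)) := ENNReal.ofReal_le_ofReal hKreal
  -- the t-integral
  have hii : IntervalIntegrable (fun t : ℝ => 2 * (1-t) ^ (-a)) volume (1/2) 1 := by
    have h1 : IntervalIntegrable (fun u : ℝ => u ^ (-a)) volume (1/2) 0 :=
      intervalIntegral.intervalIntegrable_rpow' (by linarith)
    have h2 := (h1.comp_sub_left 1).const_mul 2
    norm_num at h2
    exact h2
  have hInt : Integrable (fun t : ℝ => 2 * (1-t) ^ (-a))
      (volume.restrict (Set.Ioo (1/2 : ℝ) 1)) := by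
    have := (intervalIntegrable_iff_integrableOn_Ioc_of_le (by norm_num : (1/2:ℝ) ≤ 1)).1 hii
    exact this.mono_set Set.Ioo_subset_Ioc_self
  have hval : ∫ t in Set.Ioo (1/2 : ℝ) 1, 2 * (1-t) ^ (-a) = 2 ^ a / (1 - a) := by
    rw [← integral_Ioc_eq_integral_Ioo,
      ← intervalIntegral.integral_of_le (by norm_num : (1/2:ℝ) ≤ 1),
      intervalIntegral.integral_const_mul]
    have hcs := intervalIntegral.integral_comp_sub_left (a := (1/2:ℝ)) (b := 1)
      (fun u : ℝ => u ^ (-a)) 1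
    norm_num at hcs
    rw [hcs, integral_rpow (Or.inl (by linarith))]
    rw [Real.zero_rpow (by intro h; linarith : -a + 1 ≠ 0)]
    have h12 : ((1:ℝ)/2) ^ (-a+1) = 2 ^ (a - 1) := by
      rw [show (1:ℝ)/2 = 2⁻¹ by norm_num, ← Real.rpow_neg_one (2:ℝ),
        ← Real.rpow_mul (by norm_num : (0:ℝ) ≤ 2)]
      congr 1
      ring
    have h2a : (2:ℝ) ^ a = 2 * 2 ^ (a-1) := by
      rw [show a = 1 + (a-1) by ring, Real.rpow_add (by norm_num : (0:ℝ) < 2),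
        Real.rpow_one]
      ring_nf
    rw [h12, sub_zero, h2a, show -a+1 = 1-a by ring, mul_div_assoc]
  have hnn : 0 ≤ᵐ[volume.restrict (Set.Ioo (1/2 : ℝ) 1)] fun t : ℝ => 2 * (1-t) ^ (-a) :=
    (ae_restrict_mem measurableSet_Ioo).mono fun t ht =>
      mul_nonneg (by norm_num) (Real.rpow_nonneg (by linarith [ht.2]) _)
  have htint : ∫⁻ t in Set.Ioo (1/2 : ℝ) 1, ENNReal.ofReal (2 * (1-t) ^ (-a)) =
      ENNReal.ofReal (2 ^ a / (1 - a)) := by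
    rw [← ofReal_integral_eq_lintegral_ofReal hInt hnn, hval]
  calc eLpNorm (fun x => ∫ t in Set.Ioc (1/2 : ℝ) 1,
        (∫ y, ψ (y + t⁻¹ • (x - y)) * f y) / t ^ (n + 1)) q volume
      = (∫⁻ x, (‖∫ t in Set.Ioc (1/2 : ℝ) 1,
          (∫ y, ψ (y + t⁻¹ • (x - y)) * f y) / t ^ (n + 1)‖₊ : ℝ≥0∞) ^ p) ^ (1/p) := by
        rw [eLpNorm_eq_lintegral_rpow_enorm_toReal hq0 hqt, hqr]; rfl
    _ ≤ (∫⁻ x, (∫⁻ t in Set.Ioo (1/2 : ℝ) 1, H x t) ^ p) ^ (1/p) := by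
        apply ENNReal.rpow_le_rpow _ (by positivity)
        exact lintegral_mono fun x => ENNReal.rpow_le_rpow (hpt x) hp0.le
    _ ≤ ∫⁻ t in Set.Ioo (1/2 : ℝ) 1, (∫⁻ x, H x t ^ p) ^ (1/p) := by
        exact my_minkowski volume (volume.restrict (Set.Ioo (1/2 : ℝ) 1)) hp1 H hHmeas
    _ ≤ ∫⁻ t in Set.Ioo (1/2 : ℝ) 1,
          ENNReal.ofReal (2 * (1-t) ^ (-a)) * (Iψ * Np ^ (1/p)) := by
        apply setLIntegral_mono' measurableSet_Ioo hstep
    _ = (∫⁻ t in Set.Ioo (1/2 : ℝ) 1, ENNReal.ofReal (2 * (1-t) ^ (-a))) * (Iψ * Np ^ (1/p)) := by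
        exact lintegral_mul_const' _ _
          (ENNReal.mul_ne_top (by rw [hIψ]; exact ENNReal.ofReal_ne_top)
            (by rw [← hN]; exact hf.2.ne))
    _ = ENNReal.ofReal (2 ^ a / (1 - a)) * (Iψ * Np ^ (1/p)) := by rw [htint]
    _ = ENNReal.ofReal (2 ^ a / (1 - a) * ∫ x, |ψ x|) * N := by
        rw [hIψ, hN, ENNReal.ofReal_mul (div_nonneg (by positivity) (by linarith)), mul_assoc]
end

section
/- Let Ω ⊂ ℝⁿ be a bounded domain in which the improved Poincaré inequality holds with constant C_{iP,Ω}: ‖f‖_{L²(Ω)} ≤ C_{iP,Ω} ‖d ∇f‖_{L²(Ω)} for all f ∈ H¹(Ω) with ∫_Ω f = 0, where d(x) = dist(x, ∂Ω). Then for every f ∈ L²(Ω) with ∫_Ω f = 0 there exists a vector field v ∈ L²(Ω)ⁿ satisfying div v = f in Ω and v·n = 0 on ∂Ω (both in the distributional sense, i.e., ∫_Ω v·∇g = −∫_Ω f g for all g ∈ H¹(Ω)), with ‖v/d‖_{L²(Ω)} ≤ C_{iP,Ω} ‖f‖_{L²(Ω)}. -/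
open MeasureTheory Real

section helpers

variable {α : Type*} [MeasurableSpace α] {μ : Measure α}
variable {F : Type*} [NormedAddCommGroup F] [InnerProductSpace ℝ F]

lemma integrable_mul_of_mem2 {f g : α → ℝ} (hf : MemLp f 2 μ) (hg : MemLp g 2 μ) :
    Integrable (fun x => f x * g x) μ := by
  have h := L2.integrable_inner (𝕜 := ℝ) (hf.toLp f) (hg.toLp g)
  refine h.congr ?_
  filter_upwards [hf.coeFn_toLp, hg.coeFn_toLp] with x hx hy
  simp [hx, hy, RCLike.inner_apply, mul_comm]

lemma inner_toLp_eq {f g : α → ℝ} (hf : MemLp f 2 μ) (hg : MemLp g 2 μ) :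
    (inner ℝ (hf.toLp f) (hg.toLp g) : ℝ) = ∫ x, f x * g x ∂μ := by
  rw [L2.inner_def]
  refine integral_congr_ae ?_
  filter_upwards [hf.coeFn_toLp, hg.coeFn_toLp] with x hx hy
  simp [hx, hy, RCLike.inner_apply, mul_comm]

lemma norm_toLp_eq_sqrt {u : α → F} [CompleteSpace F] (hu : MemLp u 2 μ) :
    ‖hu.toLp u‖ = Real.sqrt (∫ x, ‖u x‖ ^ 2 ∂μ) := by
  have h : (inner ℝ (hu.toLp u) (hu.toLp u) : ℝ) = ∫ x, ‖u x‖ ^ 2 ∂μ := by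
    rw [L2.inner_def]
    refine integral_congr_ae ?_
    filter_upwards [hu.coeFn_toLp] with x hx
    rw [hx, real_inner_self_eq_norm_sq]
  rw [← h, real_inner_self_eq_norm_sq, Real.sqrt_sq (norm_nonneg _)]

lemma norm_toLp_eq_sqrt' {f : α → ℝ} (hf : MemLp f 2 μ) :
    ‖hf.toLp f‖ = Real.sqrt (∫ x, f x ^ 2 ∂μ) := by
  have := norm_toLp_eq_sqrt (F := ℝ) hf
  simpa [sq_abs] using this

lemma abs_integral_mul_le {f g : α → ℝ} (hf : MemLp f 2 μ) (hg : MemLp g 2 μ) :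
    |∫ x, f x * g x ∂μ| ≤ Real.sqrt (∫ x, f x ^ 2 ∂μ) * Real.sqrt (∫ x, g x ^ 2 ∂μ) := by
  rw [← inner_toLp_eq hf hg, ← norm_toLp_eq_sqrt' hf, ← norm_toLp_eq_sqrt' hg]
  exact abs_real_inner_le_norm _ _

lemma integral_norm_sq_coe [CompleteSpace F] (w : Lp F 2 μ) :
    ∫ x, ‖w x‖ ^ 2 ∂μ = ‖w‖ ^ 2 := by
  rw [← real_inner_self_eq_norm_sq, L2.inner_def]
  exact integral_congr_ae (Filter.Eventually.of_forall fun x => (real_inner_self_eq_norm_sq _).symm)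

lemma integrable_norm_sq_coe [CompleteSpace F] (w : Lp F 2 μ) :
    Integrable (fun x => ‖w x‖ ^ 2) μ := by
  have h := L2.integrable_inner (𝕜 := ℝ) w w
  refine h.congr (Filter.Eventually.of_forall fun x => real_inner_self_eq_norm_sq _)

end helpers

section gradhelpers

variable {F : Type*} [NormedAddCommGroup F] [InnerProductSpace ℝ F] [CompleteSpace F]

lemma gradient_add' {f g : F → ℝ} {x : F} (hf : DifferentiableAt ℝ f x)
    (hg : DifferentiableAt ℝ g x) :
    gradient (f + g) x = gradient f x + gradient g x := by
  unfold gradient; rw [fderiv_add hf hg, map_add]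

lemma gradient_smul' {f : F → ℝ} {x : F} (c : ℝ) (hf : DifferentiableAt ℝ f x) :
    gradient (c • f) x = c • gradient f x := by
  unfold gradient; rw [fderiv_const_smul hf c, map_smulₛₗ]; simp

lemma gradient_zero' (x : F) : gradient (0 : F → ℝ) x = 0 := by
  have : (0 : F → ℝ) = fun _ => (0:ℝ) := rfl
  rw [this, gradient_fun_const]

lemma gradient_sub_const' {f : F → ℝ} {x : F} (c : ℝ) :
    gradient (fun y => f y - c) x = gradient f x := by
  unfold gradient; rw [fderiv_sub_const]

lemma gradient_clm (L : F →L[ℝ] ℝ) (x : F) :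
    gradient (fun y => L y) x = (InnerProductSpace.toDual ℝ F).symm L := by
  unfold gradient; rw [L.fderiv]

variable [MeasurableSpace F] (μ : Measure F)

/-- The space of admissible test functions. -/
def Adm : Submodule ℝ (F → ℝ) where
  carrier := {g | Differentiable ℝ g ∧ MemLp g 2 μ ∧ MemLp (fun x => gradient g x) 2 μ}
  add_mem' := by
    rintro a b ⟨ha1, ha2, ha3⟩ ⟨hb1, hb2, hb3⟩
    refine ⟨ha1.add hb1, ha2.add hb2, ?_⟩
    have h : (fun x => gradient (a + b) x) = fun x => gradient a x + gradient b x :=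
      funext fun x => gradient_add' (ha1 x) (hb1 x)
    rw [h]; exact ha3.add hb3
  zero_mem' := by
    refine ⟨fun x => differentiableAt_const (0:ℝ), MemLp.zero, ?_⟩
    have h : (fun x => gradient (0 : F → ℝ) x) = fun _ => (0:F) :=
      funext fun x => gradient_zero' x
    rw [h]; exact MemLp.zero
  smul_mem' := by
    rintro c a ⟨ha1, ha2, ha3⟩
    refine ⟨ha1.const_smul c, ha2.const_smul c, ?_⟩
    have h : (fun x => gradient (c • a) x) = fun x => c • gradient a x :=
      funext fun x => gradient_smul' c (ha1 x)
    rw [h]; exact ha3.const_smul c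

lemma mem_Adm_iff {g : F → ℝ} : g ∈ Adm μ ↔
    Differentiable ℝ g ∧ MemLp g 2 μ ∧ MemLp (fun x => gradient g x) 2 μ := Iff.rfl

end gradhelpers

lemma volume_hyperplane {n : ℕ} (i : Fin n) (c : ℝ) :
    volume {x : EuclideanSpace ℝ (Fin n) | x i = c} = 0 := by
  have e := EuclideanSpace.volume_preserving_symm_measurableEquiv_toLp (Fin n)
  have hms : MeasurableSet {y : Fin n → ℝ | y i = c} := by
    have : {y : Fin n → ℝ | y i = c} = (fun y : Fin n → ℝ => y i) ⁻¹' {c} := rfl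
    rw [this]
    exact measurable_pi_apply i (measurableSet_singleton c)
  have hs : {x : EuclideanSpace ℝ (Fin n) | x i = c}
      = (MeasurableEquiv.toLp 2 (Fin n → ℝ)).symm ⁻¹' {y : Fin n → ℝ | y i = c} := rfl
  rw [hs, e.measure_preimage hms.nullMeasurableSet]
  have hset : {y : Fin n → ℝ | y i = c}
      = Set.pi Set.univ (fun j => if j = i then ({c} : Set ℝ) else Set.univ) := by
    ext y
    simp only [Set.mem_setOf_eq, Set.mem_pi, Set.mem_univ, true_implies]
    constructor
    · intro h j
      by_cases hj : j = i
      · subst hj; simp [h]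
      · simp [hj]
    · intro h
      have := h i
      simpa using this
  rw [hset, volume_pi_pi]
  exact Finset.prod_eq_zero (Finset.mem_univ i) (by simp)

set_option maxHeartbeats 8000000 in
/-- if the improved Poincaré inequality holds in `Ω` with constant `C_{iP}`,
then for every `f ∈ L²₀(Ω)` there is `v ∈ L²(Ω)ⁿ` with `div v = f`, `v·n = 0` on `∂Ω`
(distributionally: `∫_Ω v·∇g = −∫_Ω f g` for all `g ∈ H¹(Ω)`), and
`‖v/d‖_{L²(Ω)} ≤ C_{iP} ‖f‖_{L²(Ω)}`, where `d(x) = dist(x, ∂Ω)`. -/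
theorem dual_improved_poincare (n : ℕ)
    (Ω : Set (EuclideanSpace ℝ (Fin n)))
    (hΩb : Bornology.IsBounded Ω) (hΩm : MeasurableSet Ω) (hΩne : Ω.Nonempty)
    (CiP : ℝ)
    (hiP : ∀ g : EuclideanSpace ℝ (Fin n) → ℝ,
      (∀ x, DifferentiableAt ℝ g x) →
      MemLp g 2 (volume.restrict Ω) →
      MemLp (fun x => gradient g x) 2 (volume.restrict Ω) →
      (∫ x in Ω, g x) = 0 →
      Real.sqrt (∫ x in Ω, (g x) ^ 2) ≤
        CiP * Real.sqrt (∫ x in Ω,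
          (Metric.infDist x (frontier Ω)) ^ 2 * ‖gradient g x‖ ^ 2))
    (f : EuclideanSpace ℝ (Fin n) → ℝ)
    (hf : MemLp f 2 (volume.restrict Ω)) (hf0 : (∫ x in Ω, f x) = 0) :
    ∃ v : EuclideanSpace ℝ (Fin n) → EuclideanSpace ℝ (Fin n),
      MemLp v 2 (volume.restrict Ω) ∧
      (∀ g : EuclideanSpace ℝ (Fin n) → ℝ,
        (∀ x, DifferentiableAt ℝ g x) →
        MemLp g 2 (volume.restrict Ω) →
        MemLp (fun x => gradient g x) 2 (volume.restrict Ω) →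
        (∫ x in Ω, (inner ℝ (v x) (gradient g x) : ℝ)) = -∫ x in Ω, f x * g x) ∧
      Real.sqrt (∫ x in Ω, ‖v x‖ ^ 2 / (Metric.infDist x (frontier Ω)) ^ 2) ≤
        CiP * Real.sqrt (∫ x in Ω, (f x) ^ 2) := by
  classical
  have hΩfin : volume Ω < ⊤ := hΩb.measure_lt_top (μ := volume)
  haveI : IsFiniteMeasure (volume.restrict Ω) :=
    ⟨by rw [Measure.restrict_apply_univ]; exact hΩfin⟩
  -- Case 1 : f is a.e. zero
  by_cases hfz : f =ᵐ[volume.restrict Ω] 0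
  · refine ⟨0, MemLp.zero, ?_, ?_⟩
    · intro g _ _ _
      have h1 : (∫ x in Ω, (inner ℝ ((0 : EuclideanSpace ℝ (Fin n) → EuclideanSpace ℝ (Fin n)) x)
          (gradient g x) : ℝ)) = 0 := by simp
      have h2 : (∫ x in Ω, f x * g x) = 0 := by
        refine integral_eq_zero_of_ae ?_
        filter_upwards [hfz] with x hx
        simp [hx]
      rw [h1, h2, neg_zero]
    · have h2 : (∫ x in Ω, f x ^ 2) = 0 := by
        refine integral_eq_zero_of_ae ?_
        filter_upwards [hfz] with x hx
        simp [hx]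
      rw [h2]
      simp
  -- Preliminary positivity facts
  have hμne : volume.restrict Ω ≠ 0 := by
    intro h
    refine hfz ?_
    rw [h]
    simp [Filter.EventuallyEq]
  have hΩpos : 0 < volume Ω := by
    rcases eq_or_lt_of_le (zero_le : (0 : ENNReal) ≤ volume Ω) with h | h
    · exact absurd (Measure.restrict_eq_zero.mpr h.symm) hμne
    · exact h
  have htR : 0 < (volume Ω).toReal := ENNReal.toReal_pos hΩpos.ne' hΩfin.ne
  have hfint : Integrable f (volume.restrict Ω) := hf.integrable one_le_two
  have hsqint : Integrable (fun x => f x ^ 2) (volume.restrict Ω) :=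
    (integrable_mul_of_mem2 hf hf).congr
      (Filter.Eventually.of_forall fun x => (pow_two (f x)).symm)
  have hf2pos : 0 < ∫ x in Ω, f x ^ 2 := by
    rcases eq_or_lt_of_le (integral_nonneg (f := fun x => f x ^ 2) (fun x => sq_nonneg (f x))) with h | h
    · exfalso
      apply hfz
      have h2 : (fun x => f x ^ 2) =ᵐ[volume.restrict Ω] 0 :=
        (integral_eq_zero_iff_of_nonneg (f := fun x => f x ^ 2) (fun x => sq_nonneg (f x)) hsqint).mp h.symm
      filter_upwards [h2] with x hx
      have : f x ^ 2 = 0 := hx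
      exact pow_eq_zero_iff two_ne_zero |>.mp this
    · exact h
  -- n is positive
  have hn : 0 < n := by
    rcases Nat.eq_zero_or_pos n with h0 | h0
    · exfalso
      subst h0
      apply hfz
      haveI hsub : Subsingleton (EuclideanSpace ℝ (Fin 0)) :=
        ⟨fun a b => PiLp.ext fun i => i.elim0⟩
      have hfconst : f = fun _ => f 0 := funext fun x => by rw [Subsingleton.elim x 0]
      have hint : (∫ x in Ω, f x) = (volume Ω).toReal • f 0 := by
        rw [hfconst]
        exact setIntegral_const _
      rw [hf0] at hint
      have hzero : f 0 = 0 := by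
        have := hint.symm
        rw [smul_eq_mul] at this
        rcases mul_eq_zero.mp this with h | h
        · exact absurd h htR.ne'
        · exact h
      refine Filter.Eventually.of_forall fun x => ?_
      rw [hfconst]
      simp [hzero]
    · exact h0
  -- boundedness of the distance function on Ω
  obtain ⟨R, hR⟩ := hΩb.subset_closedBall 0
  have hDb : ∀ x ∈ Ω, Metric.infDist x (frontier Ω) ≤ |R| + |R| := by
    intro x hx
    rcases (frontier Ω).eq_empty_or_nonempty with he | ⟨y, hy⟩
    · rw [he, Metric.infDist_empty]
      positivity
    · refine le_trans (Metric.infDist_le_dist_of_mem hy) ?_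
      have hxb : ‖x‖ ≤ R := by simpa using hR hx
      have hyb : ‖y‖ ≤ R := by
        have : y ∈ Metric.closedBall (0 : EuclideanSpace ℝ (Fin n)) R :=
          closure_minimal hR Metric.isClosed_closedBall (frontier_subset_closure hy)
        simpa using this
      calc dist x y ≤ ‖x‖ + ‖y‖ := dist_le_norm_add_norm x y
        _ ≤ |R| + |R| := add_le_add (hxb.trans (le_abs_self R)) (hyb.trans (le_abs_self R))
  have hDcont : Continuous fun x : EuclideanSpace ℝ (Fin n) =>
      Metric.infDist x (frontier Ω) := Metric.continuous_infDist_pt _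
  -- multiplication by the distance function preserves L²
  have memD : ∀ (G : Type) [NormedAddCommGroup G] [NormedSpace ℝ G]
      (u : EuclideanSpace ℝ (Fin n) → G), MemLp u 2 (volume.restrict Ω) →
      MemLp (fun x => Metric.infDist x (frontier Ω) • u x) 2 (volume.restrict Ω) := by
    intro G _ _ u hu
    refine MemLp.of_le_mul (c := |R| + |R|) hu (hDcont.aestronglyMeasurable.smul hu.1) ?_
    filter_upwards [ae_restrict_mem hΩm] with x hx
    rw [norm_smul, Real.norm_eq_abs, abs_of_nonneg Metric.infDist_nonneg]
    exact mul_le_mul_of_nonneg_right (hDb x hx) (norm_nonneg _)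
  -- CiP is positive, using the coordinate function
  have hCiP : 0 < CiP := by
    set i0 : Fin n := ⟨0, hn⟩ with hi0
    set g0 : EuclideanSpace ℝ (Fin n) → ℝ := fun x => EuclideanSpace.proj (𝕜 := ℝ) i0 x
      with hg0
    have hg0diff : ∀ x, DifferentiableAt ℝ g0 x := fun x =>
      (EuclideanSpace.proj (𝕜 := ℝ) i0).differentiableAt
    have hg0mem : MemLp g0 2 (volume.restrict Ω) := by
      refine MemLp.of_bound ((EuclideanSpace.proj (𝕜 := ℝ) i0).continuous.aestronglyMeasurable)
        (‖(EuclideanSpace.proj i0 : EuclideanSpace ℝ (Fin n) →L[ℝ] ℝ)‖ * |R|) ?_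
      filter_upwards [ae_restrict_mem hΩm] with x hx
      have hxb : ‖x‖ ≤ |R| := by
        have : ‖x‖ ≤ R := by simpa using hR hx
        exact this.trans (le_abs_self R)
      calc ‖g0 x‖ ≤ ‖(EuclideanSpace.proj i0 : EuclideanSpace ℝ (Fin n) →L[ℝ] ℝ)‖ * ‖x‖ :=
            (EuclideanSpace.proj (𝕜 := ℝ) i0).le_opNorm x
        _ ≤ _ := mul_le_mul_of_nonneg_left hxb (norm_nonneg _)
    have hg0grad : ∀ x, gradient g0 x =
        (InnerProductSpace.toDual ℝ (EuclideanSpace ℝ (Fin n))).symm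
          (EuclideanSpace.proj (𝕜 := ℝ) i0) := fun x => gradient_clm _ x
    have hg0gradmem : MemLp (fun x => gradient g0 x) 2 (volume.restrict Ω) := by
      have h : (fun x => gradient g0 x) = fun _ =>
          (InnerProductSpace.toDual ℝ (EuclideanSpace ℝ (Fin n))).symm
            (EuclideanSpace.proj (𝕜 := ℝ) i0) := funext hg0grad
      rw [h]
      exact memLp_const _
    set c0 : ℝ := (∫ x in Ω, g0 x) / (volume Ω).toReal with hc0
    set gb : EuclideanSpace ℝ (Fin n) → ℝ := fun x => g0 x - c0 with hgb
    have hgbdiff : ∀ x, DifferentiableAt ℝ gb x := fun x => (hg0diff x).sub_const c0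
    have hgbmem : MemLp gb 2 (volume.restrict Ω) := hg0mem.sub (memLp_const c0)
    have hgbgrad : ∀ x, gradient gb x = gradient g0 x := fun x => gradient_sub_const' c0
    have hgbgradmem : MemLp (fun x => gradient gb x) 2 (volume.restrict Ω) := by
      have h : (fun x => gradient gb x) = fun x => gradient g0 x := funext hgbgrad
      rw [h]; exact hg0gradmem
    have hgbint : (∫ x in Ω, gb x) = 0 := by
      simp only [hgb]
      rw [integral_sub (hg0mem.integrable one_le_two) (integrable_const c0),
        setIntegral_const, measureReal_def, smul_eq_mul, hc0, mul_comm, div_mul_cancel₀ _ htR.ne', sub_self]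
    have hPo := hiP gb hgbdiff hgbmem hgbgradmem hgbint
    -- the left side is positive
    have hgb2pos : 0 < ∫ x in Ω, gb x ^ 2 := by
      have hgbsqint : Integrable (fun x => gb x ^ 2) (volume.restrict Ω) :=
        (integrable_mul_of_mem2 hgbmem hgbmem).congr
          (Filter.Eventually.of_forall fun x => (pow_two (gb x)).symm)
      rcases eq_or_lt_of_le (integral_nonneg (f := fun x => gb x ^ 2) (fun x => sq_nonneg (gb x))) with h | h
      · exfalso
        have h2 : (fun x => gb x ^ 2) =ᵐ[volume.restrict Ω] 0 :=
          (integral_eq_zero_iff_of_nonneg (f := fun x => gb x ^ 2) (fun x => sq_nonneg (gb x)) hgbsqint).mp h.symm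
        have h3 : (fun x => gb x) =ᵐ[volume.restrict Ω] 0 := by
          filter_upwards [h2] with x hx
          have : gb x ^ 2 = 0 := hx
          exact pow_eq_zero_iff two_ne_zero |>.mp this
        -- so Ω is a.e. contained in a hyperplane
        have hopen : MeasurableSet {x : EuclideanSpace ℝ (Fin n) | gb x ≠ 0} := by
          have : Continuous gb := ((EuclideanSpace.proj (𝕜 := ℝ) i0).continuous).sub
            continuous_const
          exact (isOpen_ne_fun this continuous_const).measurableSet
        have hzero : volume ({x : EuclideanSpace ℝ (Fin n) | gb x ≠ 0} ∩ Ω) = 0 := by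
          have h5 : ∀ᵐ x ∂(volume.restrict Ω), gb x = 0 := by
            filter_upwards [h3] with x hx
            exact hx
          have h4 : (volume.restrict Ω) {x : EuclideanSpace ℝ (Fin n) | gb x ≠ 0} = 0 :=
            ae_iff.mp h5
          rwa [Measure.restrict_apply hopen] at h4
        have hsub : Ω ⊆ {x : EuclideanSpace ℝ (Fin n) | x i0 = c0}
            ∪ ({x : EuclideanSpace ℝ (Fin n) | gb x ≠ 0} ∩ Ω) := by
          intro x hx
          by_cases hgbx : gb x = 0
          · left
            have : g0 x = c0 := by
              have := sub_eq_zero.mp hgbx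
              exact this
            exact this
          · right; exact ⟨hgbx, hx⟩
        have : volume Ω = 0 := by
          refine le_antisymm ?_ zero_le
          calc volume Ω ≤ volume ({x : EuclideanSpace ℝ (Fin n) | x i0 = c0}
                ∪ ({x : EuclideanSpace ℝ (Fin n) | gb x ≠ 0} ∩ Ω)) := measure_mono hsub
            _ ≤ volume {x : EuclideanSpace ℝ (Fin n) | x i0 = c0}
                + volume ({x : EuclideanSpace ℝ (Fin n) | gb x ≠ 0} ∩ Ω) := measure_union_le _ _
            _ = 0 := by rw [volume_hyperplane, hzero, add_zero]
        exact absurd this hΩpos.ne'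
      · exact h
    have hL : 0 < Real.sqrt (∫ x in Ω, gb x ^ 2) := Real.sqrt_pos.mpr hgb2pos
    by_contra hc
    push_neg at hc
    have hRHS : CiP * Real.sqrt (∫ x in Ω,
        (Metric.infDist x (frontier Ω)) ^ 2 * ‖gradient gb x‖ ^ 2) ≤ 0 :=
      mul_nonpos_of_nonpos_of_nonneg hc (Real.sqrt_nonneg _)
    exact absurd (hL.trans_le hPo) (not_lt.mpr hRHS)
  -- The main construction
  set K := CiP * Real.sqrt (∫ x in Ω, f x ^ 2) with hK
  have hKnn : 0 ≤ K := mul_nonneg hCiP.le (Real.sqrt_nonneg _)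
  -- the space of admissible functions
  have hΦmem : ∀ g : Adm (F := EuclideanSpace ℝ (Fin n)) (volume.restrict Ω),
      MemLp (fun x => Metric.infDist x (frontier Ω) • gradient (g : _ → ℝ) x) 2
        (volume.restrict Ω) :=
    fun g => memD _ _ ((mem_Adm_iff _).mp g.2).2.2
  -- the linear map g ↦ d • ∇g into L²
  set Φ : Adm (F := EuclideanSpace ℝ (Fin n)) (volume.restrict Ω) →ₗ[ℝ]
      Lp (EuclideanSpace ℝ (Fin n)) 2 (volume.restrict Ω) :=
    { toFun := fun g => (hΦmem g).toLp _
      map_add' := by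
        intro a b
        obtain ⟨ha1, -, -⟩ := (mem_Adm_iff _).mp a.2
        obtain ⟨hb1, -, -⟩ := (mem_Adm_iff _).mp b.2
        have h1 : (fun x => Metric.infDist x (frontier Ω) • gradient (↑(a + b) : _ → ℝ) x)
            =ᵐ[volume.restrict Ω]
            (fun x => Metric.infDist x (frontier Ω) • gradient (a : _ → ℝ) x)
            + fun x => Metric.infDist x (frontier Ω) • gradient (b : _ → ℝ) x := by
          refine Filter.Eventually.of_forall fun x => ?_
          have h2 : gradient ((a : _ → ℝ) + (b : _ → ℝ)) x
              = gradient (a : _ → ℝ) x + gradient (b : _ → ℝ) x :=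
            gradient_add' (ha1 x) (hb1 x)
          simp [h2, smul_add]
        exact (MemLp.toLp_congr (hΦmem (a + b)) ((hΦmem a).add (hΦmem b)) h1).trans
          (MemLp.toLp_add (hΦmem a) (hΦmem b))
      map_smul' := by
        intro c a
        obtain ⟨ha1, -, -⟩ := (mem_Adm_iff _).mp a.2
        have h1 : (fun x => Metric.infDist x (frontier Ω) • gradient (↑(c • a) : _ → ℝ) x)
            =ᵐ[volume.restrict Ω]
            c • fun x => Metric.infDist x (frontier Ω) • gradient (a : _ → ℝ) x := by
          refine Filter.Eventually.of_forall fun x => ?_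
          have h2 : gradient (c • (a : _ → ℝ)) x = c • gradient (a : _ → ℝ) x :=
            gradient_smul' c (ha1 x)
          simp only [Submodule.coe_smul, h2, Pi.smul_apply]
          rw [smul_comm]
        show (hΦmem (c • a)).toLp _ = c • (hΦmem a).toLp _
        exact (MemLp.toLp_congr (hΦmem (c • a)) ((hΦmem a).const_smul c) h1).trans
          (MemLp.toLp_const_smul c (hΦmem a)) } with hΦ
  -- the linear functional g ↦ -∫ f g
  set ψ : Adm (F := EuclideanSpace ℝ (Fin n)) (volume.restrict Ω) →ₗ[ℝ] ℝ :=
    { toFun := fun g => -∫ x in Ω, f x * (g : _ → ℝ) x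
      map_add' := by
        intro a b
        have h1 : (∫ x in Ω, f x * (↑(a + b) : _ → ℝ) x)
            = (∫ x in Ω, f x * (a : _ → ℝ) x) + ∫ x in Ω, f x * (b : _ → ℝ) x := by
          rw [← integral_add (integrable_mul_of_mem2 hf ((mem_Adm_iff _).mp a.2).2.1)
            (integrable_mul_of_mem2 hf ((mem_Adm_iff _).mp b.2).2.1)]
          refine integral_congr_ae (Filter.Eventually.of_forall fun x => ?_)
          simp [mul_add]
        simp only [h1]
        ring
      map_smul' := by
        intro c a
        have h1 : (∫ x in Ω, f x * (↑(c • a) : _ → ℝ) x)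
            = c * ∫ x in Ω, f x * (a : _ → ℝ) x := by
          rw [← integral_const_mul]
          refine integral_congr_ae (Filter.Eventually.of_forall fun x => ?_)
          simp only [Submodule.coe_smul, Pi.smul_apply, smul_eq_mul]
          ring
        simp only [h1, RingHom.id_apply, smul_eq_mul]
        ring } with hψ
  -- the key estimate
  have hΦnorm : ∀ g : Adm (F := EuclideanSpace ℝ (Fin n)) (volume.restrict Ω),
      ‖Φ g‖ = Real.sqrt (∫ x in Ω,
        (Metric.infDist x (frontier Ω)) ^ 2 * ‖gradient (g : _ → ℝ) x‖ ^ 2) := by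
    intro g
    have h0 : Φ g = (hΦmem g).toLp _ := rfl
    rw [h0, norm_toLp_eq_sqrt]
    congr 1
    refine integral_congr_ae (Filter.Eventually.of_forall fun x => ?_)
    simp only [norm_smul, Real.norm_eq_abs, mul_pow, sq_abs]
  have keybound : ∀ g : Adm (F := EuclideanSpace ℝ (Fin n)) (volume.restrict Ω),
      ‖ψ g‖ ≤ K * ‖Φ g‖ := by
    intro g
    obtain ⟨hg1, hg2, hg3⟩ := (mem_Adm_iff _).mp g.2
    set c0 : ℝ := (∫ x in Ω, (g : _ → ℝ) x) / (volume Ω).toReal with hc0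
    set gb : EuclideanSpace ℝ (Fin n) → ℝ := fun x => (g : _ → ℝ) x - c0 with hgb
    have hgbdiff : ∀ x, DifferentiableAt ℝ gb x := fun x => (hg1 x).sub_const c0
    have hgbmem : MemLp gb 2 (volume.restrict Ω) := hg2.sub (memLp_const c0)
    have hgbgrad : ∀ x, gradient gb x = gradient (g : _ → ℝ) x :=
      fun x => gradient_sub_const' c0
    have hgbgradmem : MemLp (fun x => gradient gb x) 2 (volume.restrict Ω) := by
      have h : (fun x => gradient gb x) = fun x => gradient (g : _ → ℝ) x := funext hgbgrad
      rw [h]; exact hg3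
    have hgbint : (∫ x in Ω, gb x) = 0 := by
      simp only [hgb]
      rw [integral_sub (hg2.integrable one_le_two) (integrable_const c0),
        setIntegral_const, measureReal_def, smul_eq_mul, hc0, mul_comm, div_mul_cancel₀ _ htR.ne', sub_self]
    have hPo := hiP gb hgbdiff hgbmem hgbgradmem hgbint
    have hPo2 : Real.sqrt (∫ x in Ω, gb x ^ 2) ≤ CiP * Real.sqrt (∫ x in Ω,
        (Metric.infDist x (frontier Ω)) ^ 2 * ‖gradient (g : _ → ℝ) x‖ ^ 2) := by
      refine hPo.trans (le_of_eq ?_)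
      congr 2
      refine integral_congr_ae (Filter.Eventually.of_forall fun x => ?_)
      simp only [hgbgrad]
    have hsplit : (∫ x in Ω, f x * gb x) = ∫ x in Ω, f x * (g : _ → ℝ) x := by
      calc (∫ x in Ω, f x * gb x)
          = ∫ x in Ω, (f x * (g : _ → ℝ) x - c0 * f x) :=
            integral_congr_ae (Filter.Eventually.of_forall fun x => by
              simp only [hgb]; ring)
        _ = (∫ x in Ω, f x * (g : _ → ℝ) x) - ∫ x in Ω, c0 * f x :=
            integral_sub (integrable_mul_of_mem2 hf hg2) (hfint.const_mul c0)
        _ = ∫ x in Ω, f x * (g : _ → ℝ) x := by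
            rw [integral_const_mul, hf0, mul_zero, sub_zero]
    have hψg : ψ g = -∫ x in Ω, f x * (g : _ → ℝ) x := rfl
    rw [hψg, Real.norm_eq_abs, abs_neg, ← hsplit]
    calc |∫ x in Ω, f x * gb x|
        ≤ Real.sqrt (∫ x in Ω, f x ^ 2) * Real.sqrt (∫ x in Ω, gb x ^ 2) :=
          abs_integral_mul_le hf hgbmem
      _ ≤ Real.sqrt (∫ x in Ω, f x ^ 2) * (CiP * Real.sqrt (∫ x in Ω,
            (Metric.infDist x (frontier Ω)) ^ 2 * ‖gradient (g : _ → ℝ) x‖ ^ 2)) :=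
          mul_le_mul_of_nonneg_left hPo2 (Real.sqrt_nonneg _)
      _ = K * ‖Φ g‖ := by rw [hΦnorm g, hK]; ring
  -- pass to the range of Φ
  have hker : LinearMap.ker Φ ≤ LinearMap.ker ψ := by
    intro g hg
    rw [LinearMap.mem_ker] at hg ⊢
    have h := keybound g
    rw [hg, norm_zero, mul_zero] at h
    exact norm_le_zero_iff.mp h
  set χ : LinearMap.range Φ →ₗ[ℝ] ℝ :=
    (Submodule.liftQ (LinearMap.ker Φ) ψ hker).comp
      (Φ.quotKerEquivRange.symm : LinearMap.range Φ →ₗ[ℝ] _) with hχdef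
  have hχ : ∀ (g : Adm (F := EuclideanSpace ℝ (Fin n)) (volume.restrict Ω))
      (hmem : Φ g ∈ LinearMap.range Φ), χ ⟨Φ g, hmem⟩ = ψ g := by
    intro g hmem
    have h1 : Φ.quotKerEquivRange.symm ⟨Φ g, hmem⟩ = Submodule.Quotient.mk g := by
      rw [LinearEquiv.symm_apply_eq]
      exact Subtype.ext (Φ.quotKerEquivRange_apply_mk g).symm
    simp only [hχdef, LinearMap.comp_apply, LinearEquiv.coe_coe]
    rw [h1, Submodule.liftQ_apply]
  have hχb : ∀ u : LinearMap.range Φ, ‖χ u‖ ≤ K * ‖u‖ := by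
    rintro ⟨u, hu⟩
    obtain ⟨g, rfl⟩ := hu
    show ‖χ ⟨Φ g, LinearMap.mem_range_self Φ g⟩‖
      ≤ K * ‖(⟨Φ g, LinearMap.mem_range_self Φ g⟩ : LinearMap.range Φ)‖
    rw [hχ g]
    exact keybound g
  set χc : LinearMap.range Φ →L[ℝ] ℝ := χ.mkContinuous K hχb with hχc
  obtain ⟨L, hLext, hLnorm⟩ := exists_extension_norm_eq (LinearMap.range Φ) χc
  have hLK : ‖L‖ ≤ K := by
    rw [hLnorm, hχc]
    exact χ.mkContinuous_norm_le hKnn hχb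
  set w := (InnerProductSpace.toDual ℝ
    (Lp (EuclideanSpace ℝ (Fin n)) 2 (volume.restrict Ω))).symm L with hwdef
  have hwL : ∀ u, (inner ℝ w u : ℝ) = L u := fun u => InnerProductSpace.toDual_symm_apply
  have hwnorm : ‖w‖ ≤ K := by
    rw [hwdef, LinearIsometryEquiv.norm_map]
    exact hLK
  refine ⟨fun x => Metric.infDist x (frontier Ω) • w x, memD _ _ (Lp.memLp w), ?_, ?_⟩
  · -- the distributional divergence identity
    intro g hg1 hg2 hg3
    set gA : Adm (F := EuclideanSpace ℝ (Fin n)) (volume.restrict Ω) :=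
      ⟨g, (mem_Adm_iff _).mpr ⟨hg1, hg2, hg3⟩⟩ with hgA
    have hcoe : (gA : EuclideanSpace ℝ (Fin n) → ℝ) = g := rfl
    calc (∫ x in Ω, (inner ℝ (Metric.infDist x (frontier Ω) • w x) (gradient g x) : ℝ))
        = ∫ x in Ω, (inner ℝ (w x) (Metric.infDist x (frontier Ω) • gradient g x) : ℝ) := by
          refine integral_congr_ae (Filter.Eventually.of_forall fun x => ?_)
          simp only [real_inner_smul_left, real_inner_smul_right]
      _ = ∫ x in Ω, (inner ℝ (w x) ((Φ gA : Lp (EuclideanSpace ℝ (Fin n)) 2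
            (volume.restrict Ω)) x) : ℝ) := by
          refine integral_congr_ae ?_
          have h0 : (Φ gA : Lp (EuclideanSpace ℝ (Fin n)) 2 (volume.restrict Ω))
              =ᵐ[volume.restrict Ω]
              fun x => Metric.infDist x (frontier Ω) • gradient g x :=
            (hΦmem gA).coeFn_toLp
          filter_upwards [h0] with x hx
          rw [hx]
      _ = (inner ℝ w (Φ gA) : ℝ) := (L2.inner_def w (Φ gA)).symm
      _ = L (Φ gA) := hwL _
      _ = χc ⟨Φ gA, LinearMap.mem_range_self Φ gA⟩ := hLext ⟨Φ gA, _⟩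
      _ = χ ⟨Φ gA, LinearMap.mem_range_self Φ gA⟩ := rfl
      _ = ψ gA := hχ gA _
      _ = -∫ x in Ω, f x * g x := rfl
  · -- the weighted norm bound
    have hle : (∫ x in Ω, ‖Metric.infDist x (frontier Ω) • w x‖ ^ 2
        / (Metric.infDist x (frontier Ω)) ^ 2) ≤ ∫ x in Ω, ‖w x‖ ^ 2 := by
      refine integral_mono_of_nonneg (Filter.Eventually.of_forall fun x => by positivity)
        (integrable_norm_sq_coe w) (Filter.Eventually.of_forall fun x => ?_)
      by_cases hx : Metric.infDist x (frontier Ω) = 0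
      · simp [hx]
      · simp only [norm_smul, Real.norm_eq_abs, mul_pow, sq_abs]
        rw [mul_comm, mul_div_assoc, div_self (pow_ne_zero 2 hx), mul_one]
    calc Real.sqrt (∫ x in Ω, ‖Metric.infDist x (frontier Ω) • w x‖ ^ 2
          / (Metric.infDist x (frontier Ω)) ^ 2)
        ≤ Real.sqrt (∫ x in Ω, ‖w x‖ ^ 2) := Real.sqrt_le_sqrt hle
      _ = Real.sqrt (‖w‖ ^ 2) := by rw [integral_norm_sq_coe]
      _ = ‖w‖ := Real.sqrt_sq (norm_nonneg _)
      _ ≤ K := hwnorm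
end
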